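/- In the counterexample setting, the 𝒯-closure of the singleton {0} in E = L⁰ equals M; in particular, since M ≠ {0}, the topology 𝒯 is not Hausdorff. -/
import Mathlib


noncomputable section

open Set Pointwise Filter Topology

namespace PaperSeq

/-- In the counterexample setting, Ω = ℕ (the positive integers), 𝔉 = 2^Ω and
P({j}) = 2^{-j}; since every singleton has positive probability, L⁰(𝔉, ℝ) is identified
with the ring `ℕ → ℝ` of all real sequences with pointwise operations and pointwise order. -/
abbrev Seq : Type := ℕ → ℝ

/-- `Ĩ_{{j}}`, the indicator of the singleton {j}. -/
def e (j : ℕ) : Seq := Set.indicator {j} (fun _ => (1 : ℝ))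

/-- `M = span_{L⁰}{Ĩ_{{j}} : j ∈ Ω}`, the L⁰-submodule of E = L⁰ generated by the
indicators of singletons. -/
def Mfin : Submodule Seq Seq := Submodule.span Seq (Set.range e)

/-- `L⁰₊₊ = {ξ : ξ(j) > 0 for all j}`. -/
def Lpp : Set Seq := {ξ | ∀ j, 0 < ξ j}

/-- `B_ε = {x ∈ L⁰ : |x| ≤ ε}`. -/
def Bball (ε : Seq) : Set Seq := {x | ∀ j, |x j| ≤ ε j}

/-- `U_ε = M + B_ε`. -/
def Uball (ε : Seq) : Set Seq := (Mfin : Set Seq) + Bball ε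

/-- An L⁰-seminorm on an L⁰-module F, in the counterexample setting where L⁰ = ℕ → ℝ. -/
structure IsSeqSeminorm {F : Type*} [AddCommGroup F] [Module Seq F] (p : F → Seq) : Prop where
  nonneg : ∀ x, 0 ≤ p x
  homog : ∀ (ξ : Seq) (x : F), p (ξ • x) = (fun j => |ξ j|) * p x
  triangle : ∀ x y, p (x + y) ≤ p x + p y

end PaperSeq

open PaperSeq

lemma mem_Mfin_iff (x : Seq) : x ∈ Mfin ↔ (Function.support x).Finite := by
  constructor
  · intro hx
    induction hx using Submodule.span_induction with
    | mem y hy =>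
      obtain ⟨j, rfl⟩ := hy
      refine (Set.finite_singleton j).subset ?_
      intro k hk
      simp only [Function.mem_support, e, Set.indicator_apply, Set.mem_singleton_iff] at hk ⊢
      by_contra h
      exact hk (if_neg h)
    | zero => simp
    | add a b _ _ ha hb => exact (ha.union hb).subset (Function.support_add a b)
    | smul ξ a _ ha =>
      refine ha.subset ?_
      intro k hk
      simp only [Function.mem_support, Pi.smul_apply', smul_eq_mul] at hk ⊢
      exact right_ne_zero_of_mul hk
  · intro hx
    have hrepr : x = ∑ j ∈ hx.toFinset, x • e j := by
      funext k
      rw [Finset.sum_apply]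
      have : ∀ j, (x • e j) k = if k = j then x k else 0 := by
        intro j
        show x k * e j k = _
        simp [e, Set.indicator_apply, mul_ite]
      simp only [this, Finset.sum_ite_eq hx.toFinset k (fun _ => x k)]
      by_cases hk : k ∈ hx.toFinset
      · simp [hk]
      · simp only [hk, if_false]
        simp only [Set.Finite.mem_toFinset, Function.mem_support, not_not] at hk
        exact hk
    rw [hrepr]
    exact Submodule.sum_mem _ fun j _ =>
      Submodule.smul_mem _ _ (Submodule.subset_span ⟨j, rfl⟩)

lemma Mfin_compl_open (T : TopologicalSpace Seq)
    (hT : ∀ V : Set Seq, IsOpen[T] V ↔ ∀ y ∈ V, ∃ ε ∈ Lpp, ∀ u ∈ Uball ε, y + u ∈ V) :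
    IsOpen[T] ((Mfin : Set Seq)ᶜ) := by
  rw [hT]
  intro y hy
  refine ⟨fun j => |y j| / 2 + (if y j = 0 then 1 else 0), fun j => ?_, ?_⟩
  · by_cases h : y j = 0 <;> simp [h]
  · rintro u ⟨m, hm, b, hb, rfl⟩ hcon
    have hyb : y + b ∈ Mfin := by
      have : y + (m + b) - m ∈ Mfin := Submodule.sub_mem _ hcon hm
      convert this using 1; ring
    have hsup : Function.support y ⊆ Function.support (y + b) := by
      intro j hj
      simp only [Function.mem_support] at hj ⊢
      have hbj := hb j
      simp only at hbj
      rw [if_neg hj, add_zero] at hbj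
      intro h0
      have : b j = -y j := by have : y j + b j = 0 := h0; linarith
      rw [this, abs_neg] at hbj
      have : |y j| > 0 := abs_pos.mpr hj
      linarith
    have : (Function.support y).Finite :=
      ((mem_Mfin_iff _).mp hyb).subset hsup
    exact hy ((mem_Mfin_iff y).mpr this)

/-- In the counterexample, the 𝒯-closure of {0} equals M; since M ≠ {0}, the topology 𝒯
is not Hausdorff. -/
theorem statement11 (T : TopologicalSpace Seq)
    (hT : ∀ V : Set Seq, IsOpen[T] V ↔ ∀ y ∈ V, ∃ ε ∈ Lpp, ∀ u ∈ Uball ε, y + u ∈ V) :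
    @closure Seq T {0} = (Mfin : Set Seq) ∧
    (Mfin : Set Seq) ≠ {0} ∧
    ¬ @T2Space Seq T := by
  letI := T
  have hclosure : @closure Seq T {0} = (Mfin : Set Seq) := by
    apply Set.eq_of_subset_of_subset
    · intro x hx
      by_contra hxM
      have hop := Mfin_compl_open T hT
      have := (mem_closure_iff (s := ({0} : Set Seq))).mp hx _ hop hxM
      obtain ⟨z, hz1, hz2⟩ := this
      rw [Set.mem_singleton_iff] at hz2
      subst hz2
      exact hz1 (Submodule.zero_mem Mfin)
    · intro x hx
      rw [mem_closure_iff]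
      intro o ho hxo
      obtain ⟨ε, hε, hsub⟩ := (hT o).mp ho x hxo
      refine ⟨0, ?_, rfl⟩
      have h0 : (0 : Seq) ∈ Bball ε := fun j => by
        simpa using (hε j).le
      have : x + (-x + 0) ∈ o :=
        hsub _ ⟨-x, Submodule.neg_mem _ hx, 0, h0, rfl⟩
      simpa using this
  have hne : (Mfin : Set Seq) ≠ {0} := by
    intro h
    have he0 : e 0 ∈ (Mfin : Set Seq) := Submodule.subset_span ⟨0, rfl⟩
    rw [h, Set.mem_singleton_iff] at he0
    have : e 0 0 = 1 := by simp [e]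
    rw [he0] at this
    simp at this
  refine ⟨hclosure, hne, ?_⟩
  intro h2
  haveI : T2Space Seq := h2
  have : @closure Seq T {0} = {0} := closure_singleton
  exact hne (hclosure.symm.trans this)
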